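/- The levels are well-ordered by membership: membership restricted to levels is a linear order, and every nonempty class of levels has an ∈-minimal element. -/

import Mathlib

def pot (a : ZFSet) : ZFSet :=
  ZFSet.sep (fun x => ∃ c ∈ a, x ⊆ c) (ZFSet.powerset (ZFSet.sUnion a))

def Potent (a : ZFSet) : Prop := ∀ x, (∃ c, x ⊆ c ∧ c ∈ a) → x ∈ a

def IsHistory (h : ZFSet) : Prop := ∀ x ∈ h, x = pot (x ∩ h)

def IsLevel (s : ZFSet) : Prop := ∃ h, IsHistory h ∧ s = pot h

/-! Every member of a history `h` is `pot` of the earlier members of `h`, so by `∈`-induction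
the members of a history are levels, nested by inclusion along `∈`, and every level is the
potent closure of the levels it contains. Two levels are then compared by `∈`-induction, and
well-foundedness of `∈` gives minimal elements. -/

open ZFSet

theorem mem_pot {a x : ZFSet} : x ∈ pot a ↔ ∃ c ∈ a, x ⊆ c := by
  refine ⟨fun hx => (mem_sep.1 hx).2, fun ⟨c, hc, hxc⟩ => mem_sep.2 ⟨?_, c, hc, hxc⟩⟩
  exact mem_powerset.2 fun y hy => mem_sUnion.2 ⟨c, hc, hxc hy⟩

theorem mem_pot_of_mem {a c : ZFSet} (hc : c ∈ a) : c ∈ pot a :=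
  mem_pot.2 ⟨c, hc, subset_rfl⟩

theorem pot_mono {a b : ZFSet} (hab : a ⊆ b) : pot a ⊆ pot b := fun _ hx =>
  let ⟨c, hc, hxc⟩ := mem_pot.1 hx
  mem_pot.2 ⟨c, hab hc, hxc⟩

theorem potent_pot (a : ZFSet) : Potent (pot a) := fun _ ⟨_, hxc, hc⟩ =>
  let ⟨d, hd, hcd⟩ := mem_pot.1 hc
  mem_pot.2 ⟨d, hd, hxc.trans hcd⟩

theorem Potent.mem_of_subset {a x c : ZFSet} (ha : Potent a) (hxc : x ⊆ c) (hc : c ∈ a) :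
    x ∈ a :=
  ha x ⟨c, hxc, hc⟩

namespace IsHistory

variable {h c d : ZFSet}

theorem potent_of_mem (hh : IsHistory h) (hc : c ∈ h) : Potent c :=
  hh c hc ▸ potent_pot _

theorem subset_of_mem_of_mem (hh : IsHistory h) (hc : c ∈ h) (hd : d ∈ h) (hdc : d ∈ c) :
    d ⊆ c := by
  induction d using ZFSet.inductionOn generalizing c with
  | h d ih =>
    intro e he
    obtain ⟨d', hd', hdd'⟩ := mem_pot.1 (hh c hc ▸ hdc)
    obtain ⟨e', he', hee'⟩ := mem_pot.1 (hh d hd ▸ he)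
    rw [mem_inter] at hd' he'
    have he'd' : e' ⊆ d' := ih e' he'.1 (c := d') hd'.2 he'.2 (hdd' he'.1)
    have he'c : e' ∈ c := (hh.potent_of_mem hc).mem_of_subset he'd' hd'.1
    exact (hh.potent_of_mem hc).mem_of_subset hee' he'c

theorem isLevel_of_mem (hh : IsHistory h) (hc : c ∈ h) : IsLevel c := by
  refine ⟨c ∩ h, fun x hx => ?_, hh c hc⟩
  rw [mem_inter] at hx
  -- The members of `h` below `x` already lie in `c`, since `c` is potent.
  have hinter : x ∩ (c ∩ h) = x ∩ h := by
    ext y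
    simp only [mem_inter]
    refine ⟨fun ⟨hy, _, hyh⟩ => ⟨hy, hyh⟩, fun ⟨hy, hyh⟩ => ⟨hy, ?_, hyh⟩⟩
    exact (hh.potent_of_mem hc).mem_of_subset (hh.subset_of_mem_of_mem hx.2 hyh hy) hx.1
  rw [hinter]
  exact hh x hx.2

theorem subset_pot_of_mem (hh : IsHistory h) (hc : c ∈ h) : c ⊆ pot h := by
  rw [hh c hc]
  exact pot_mono fun _ hy => (mem_inter.1 hy).2

end IsHistory

namespace IsLevel

variable {s t x : ZFSet}

theorem potent (hs : IsLevel s) : Potent s := by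
  obtain ⟨h, -, rfl⟩ := hs
  exact potent_pot h

theorem isTransitive (hs : IsLevel s) : s.IsTransitive := by
  obtain ⟨h, hh, rfl⟩ := hs
  intro x hx
  obtain ⟨c, hc, hxc⟩ := mem_pot.1 hx
  exact hxc.trans (hh.subset_pot_of_mem hc)

theorem exists_isLevel_superset (hs : IsLevel s) (hx : x ∈ s) :
    ∃ r ∈ s, IsLevel r ∧ x ⊆ r := by
  obtain ⟨h, hh, rfl⟩ := hs
  obtain ⟨c, hc, hxc⟩ := mem_pot.1 hx
  exact ⟨c, mem_pot_of_mem hc, hh.isLevel_of_mem hc, hxc⟩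

theorem subset_or_mem (hs : IsLevel s) (ht : IsLevel t) : s ⊆ t ∨ t ∈ s := by
  induction s using ZFSet.inductionOn generalizing t with
  | h s ih =>
    refine or_iff_not_imp_left.2 fun hst => ?_
    obtain ⟨x, hxs, hxt⟩ : ∃ x ∈ s, x ∉ t := by simpa [subset_def] using hst
    obtain ⟨r, hrs, hr, hxr⟩ := hs.exists_isLevel_superset hxs
    rcases ih r hrs hr ht with hrt | htr
    · -- A level of `t` containing `r` would put `x` into `t`, so all levels of `t` lie in `r`.
      have htr : t ⊆ r := by
        intro y hy
        obtain ⟨q, hqt, hq, hyq⟩ := ht.exists_isLevel_superset hy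
        rcases ih r hrs hr hq with hrq | hqr
        · exact absurd (ht.potent.mem_of_subset (hxr.trans hrq) hqt) hxt
        · exact hr.potent.mem_of_subset hyq hqr
      exact subset_antisymm htr hrt ▸ hrs
    · exact hs.isTransitive.mem_trans htr hrs

theorem mem_trichotomous (hs : IsLevel s) (ht : IsLevel t) : s ∈ t ∨ s = t ∨ t ∈ s := by
  rcases hs.subset_or_mem ht with hst | hts
  · rcases ht.subset_or_mem hs with hts | hst'
    · exact Or.inr (Or.inl (subset_antisymm hst hts))
    · exact Or.inl hst'
  · exact Or.inr (Or.inr hts)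

end IsLevel

theorem stmt7 :
    (∀ r s t : ZFSet, IsLevel r → IsLevel s → IsLevel t → r ∈ s → s ∈ t → r ∈ t) ∧
    (∀ s : ZFSet, IsLevel s → s ∉ s) ∧
    (∀ s t : ZFSet, IsLevel s → IsLevel t → (s ∈ t ∨ s = t ∨ t ∈ s)) ∧
    (∀ F : ZFSet → Prop, (∃ s, IsLevel s ∧ F s) →
      ∃ s, IsLevel s ∧ F s ∧ ∀ r, IsLevel r → F r → r ∉ s) := by
  refine ⟨fun _ _ _ _ _ ht hrs hst => ht.isTransitive.mem_trans hrs hst,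
    fun s _ => mem_irrefl s, fun _ _ hs ht => hs.mem_trichotomous ht, ?_⟩
  rintro F ⟨s, hs, hFs⟩
  obtain ⟨m, ⟨hm, hFm⟩, hmin⟩ := mem_wf.has_min {x | IsLevel x ∧ F x} ⟨s, hs, hFs⟩
  exact ⟨m, hm, hFm, fun r hr hFr => hmin r ⟨hr, hFr⟩⟩
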